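/- Subterm invariant of the Unchaining FBC: if t is a λ-term (a term without explicit substitutions) and d : t ↦of* u, then every value occurring in u is a value occurring in t. -/
import Mathlib


/-- Terms with explicit substitutions (ES): t ::= x | a | λx.t | t u | t[x←u]. -/
inductive ETerm : Type
  | var : ℕ → ETerm
  | sym : ℕ → ETerm
  | lam : ℕ → ETerm → ETerm
  | app : ETerm → ETerm → ETerm
  | esub : ETerm → ℕ → ETerm → ETerm

/-- Free variables (symbols do not count; both λx and [x←·] bind x). -/
def ETerm.fv : ETerm → Finset ℕ
  | .var x => {x}
  | .sym _ => ∅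
  | .lam x t => ETerm.fv t \ {x}
  | .app t u => ETerm.fv t ∪ ETerm.fv u
  | .esub t x u => (ETerm.fv t \ {x}) ∪ ETerm.fv u

/-- A term is closed when it has no free variables. -/
def ETerm.Closed (t : ETerm) : Prop := ETerm.fv t = ∅

/-- Capture-avoiding substitution t{x:=u} (under the convention that bound
variables are renamed apart). -/
def ETerm.subst (x : ℕ) (u : ETerm) : ETerm → ETerm
  | .var y => if y = x then u else .var y
  | .sym a => .sym a
  | .lam y t => if y = x then .lam y t else .lam y (ETerm.subst x u t)
  | .app t s => .app (ETerm.subst x u t) (ETerm.subst x u s)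
  | .esub t y s => if y = x then .esub t y (ETerm.subst x u s)
                   else .esub (ETerm.subst x u t) y (ETerm.subst x u s)

/-- Terms without explicit substitutions. -/
def ETerm.NoES : ETerm → Prop
  | .var _ => True
  | .sym _ => True
  | .lam _ t => ETerm.NoES t
  | .app t u => ETerm.NoES t ∧ ETerm.NoES u
  | .esub _ _ _ => False

/-- Substitution contexts L ::= ⟨·⟩ | L[x←t]. -/
inductive SCtx : Type
  | hole : SCtx
  | sub : SCtx → ℕ → ETerm → SCtx

/-- Plugging a term in a substitution context. -/
def SCtx.plug : SCtx → ETerm → ETerm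
  | .hole, t => t
  | .sub L x u, t => ETerm.esub (SCtx.plug L t) x u

mutual
  /-- Inerts of the Explicit FBC: A ::= a | L⟨A⟩ L'⟨f⟩. -/
  inductive EInert : ETerm → Prop
    | sym : ∀ a : ℕ, EInert (ETerm.sym a)
    | app : ∀ (L L' : SCtx) (A f : ETerm), EInert A → EFireball f →
        EInert (ETerm.app (SCtx.plug L A) (SCtx.plug L' f))
  /-- Fireballs of the Explicit FBC: f ::= v | A, values v ::= λx.t. -/
  inductive EFireball : ETerm → Prop
    | val : ∀ (x : ℕ) (t : ETerm), EFireball (ETerm.lam x t)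
    | inert : ∀ t : ETerm, EInert t → EFireball t
end

/-- Shallow contexts S ::= ⟨·⟩ | S t | t S | S[x←t]. -/
inductive ShCtx : Type
  | hole : ShCtx
  | appL : ShCtx → ETerm → ShCtx
  | appR : ETerm → ShCtx → ShCtx
  | sub : ShCtx → ℕ → ETerm → ShCtx

/-- Plugging a term in a shallow context. -/
def ShCtx.plug : ShCtx → ETerm → ETerm
  | .hole, t => t
  | .appL S u, t => ETerm.app (ShCtx.plug S t) u
  | .appR u S, t => ETerm.app u (ShCtx.plug S t)
  | .sub S x u, t => ETerm.esub (ShCtx.plug S t) x u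

/-- Plugging a shallow context in a shallow context: `ShCtx.comp S C` is S⟨C⟩. -/
def ShCtx.comp : ShCtx → ShCtx → ShCtx
  | .hole, C => C
  | .appL S u, C => .appL (ShCtx.comp S C) u
  | .appR u S, C => .appR u (ShCtx.comp S C)
  | .sub S x u, C => .sub (ShCtx.comp S C) x u

/-- Substitution on shallow contexts, homomorphic, leaving the hole unchanged. -/
def ShCtx.substS (x : ℕ) (w : ETerm) : ShCtx → ShCtx
  | .hole => .hole
  | .appL S u => .appL (ShCtx.substS x w S) (ETerm.subst x w u)
  | .appR u S => .appR (ETerm.subst x w u) (ShCtx.substS x w S)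
  | .sub S y u => .sub (ShCtx.substS x w S) y (ETerm.subst x w u)

/-- The unfolding t↓ of an ES-term (the result contains no ES). -/
def unfoldE : ETerm → ETerm
  | .var x => .var x
  | .sym a => .sym a
  | .lam x t => .lam x (unfoldE t)
  | .app t u => .app (unfoldE t) (unfoldE u)
  | .esub t x u => ETerm.subst x (unfoldE u) (unfoldE t)

/-- Relative unfolding t↓_S of a term t with respect to a shallow context S. -/
def relUnf : ShCtx → ETerm → ETerm
  | .hole, t => unfoldE t
  | .appL S _, t => relUnf S t
  | .appR _ S, t => relUnf S t
  | .sub S x u, t => ETerm.subst x (unfoldE u) (relUnf S t)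

/-- Evaluable shallow contexts: ⟨·⟩ is evaluable; if S is evaluable and t↓ is a
fireball then S t is evaluable; if S is evaluable then t S is evaluable; if
S{x:=t↓} is evaluable and t↓ is a fireball then S[x←t] is evaluable. -/
inductive Evaluable : ShCtx → Prop
  | hole : Evaluable ShCtx.hole
  | appL : ∀ (S : ShCtx) (t : ETerm), Evaluable S → EFireball (unfoldE t) →
      Evaluable (ShCtx.appL S t)
  | appR : ∀ (S : ShCtx) (t : ETerm), Evaluable S → Evaluable (ShCtx.appR t S)
  | sub : ∀ (S : ShCtx) (x : ℕ) (t : ETerm),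
      Evaluable (ShCtx.substS x (unfoldE t) S) → EFireball (unfoldE t) →
      Evaluable (ShCtx.sub S x t)

/-- Substitution contexts are shallow contexts. -/
def SCtx.toSh : SCtx → ShCtx
  | .hole => .hole
  | .sub L x t => .sub (SCtx.toSh L) x t

/-- A shallow context is applicative when its hole is applied to a subterm,
i.e. S = S'⟨L u⟩. -/
def ApplicativeCtx (S : ShCtx) : Prop :=
  ∃ (S' : ShCtx) (L : SCtx) (u : ETerm),
    S = ShCtx.comp S' (ShCtx.appL (SCtx.toSh L) u)

/-- A shallow context is useful when it is evaluable and applicative. -/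
def Useful (S : ShCtx) : Prop := Evaluable S ∧ ApplicativeCtx S

/-- Identity contexts I ::= ⟨·⟩ | I⟨x⟩[x←I'] | I[x←t]. -/
inductive ICtx : Type
  | hole : ICtx
  | sub : ICtx → ℕ → ICtx → ICtx   -- I⟨x⟩[x←I'], the hole being that of I'
  | subT : ICtx → ℕ → ETerm → ICtx -- I[x←t]

/-- Plugging in an identity context. -/
def ICtx.plug : ICtx → ETerm → ETerm
  | .hole, t => t
  | .sub I x I', t => ETerm.esub (ICtx.plug I (ETerm.var x)) x (ICtx.plug I' t)
  | .subT I x u, t => ETerm.esub (ICtx.plug I t) x u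

/-- Chain contexts C ::= S⟨x⟩[x←I] | C⟨x⟩[x←I] | S⟨C⟩. -/
inductive CCtx : Type
  | base : ShCtx → ℕ → ICtx → CCtx   -- S⟨x⟩[x←I], the hole being that of I
  | cons : CCtx → ℕ → ICtx → CCtx    -- C⟨x⟩[x←I], the hole being that of I
  | under : ShCtx → CCtx → CCtx      -- S⟨C⟩

/-- Plugging in a chain context. -/
def CCtx.plug : CCtx → ETerm → ETerm
  | .base S x I, t => ETerm.esub (ShCtx.plug S (ETerm.var x)) x (ICtx.plug I t)
  | .cons C x I, t => ETerm.esub (CCtx.plug C (ETerm.var x)) x (ICtx.plug I t)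
  | .under S C, t => ShCtx.plug S (CCtx.plug C t)

/-- The chain-starting (shallow) context C↾x of a chain context C:
(S⟨y⟩[y←I])↾x := S[y←I⟨x⟩]; (C⟨y⟩[y←I])↾x := (C↾y)[y←I⟨x⟩]; (S⟨C⟩)↾x := S⟨C↾x⟩. -/
def CCtx.start : CCtx → ℕ → ShCtx
  | .base S y I, x => ShCtx.sub S y (ICtx.plug I (ETerm.var x))
  | .cons C y I, x => ShCtx.sub (CCtx.start C y) y (ICtx.plug I (ETerm.var x))
  | .under S C, x => ShCtx.comp S (CCtx.start C x)

/-- Multiplicative rule ↦om: S⟨L⟨λx.t⟩ u⟩ ↦om S⟨L⟨t[x←u]⟩⟩ if S⟨⟨·⟩ u⟩ is useful. -/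
inductive StepOM : ETerm → ETerm → Prop
  | fire : ∀ (S : ShCtx) (L : SCtx) (x : ℕ) (t u : ETerm),
      Useful (ShCtx.comp S (ShCtx.appL ShCtx.hole u)) →
      StepOM (ShCtx.plug S (ETerm.app (SCtx.plug L (ETerm.lam x t)) u))
             (ShCtx.plug S (SCtx.plug L (ETerm.esub t x u)))

/-- Shallow exponential rule ↦oes: S⟨S'⟨x⟩[x←L⟨v⟩]⟩ ↦oes S⟨L⟨S'⟨v⟩[x←v]⟩⟩ (v a value)
if S⟨S'[x←L⟨v⟩]⟩ is useful. -/
inductive StepOES : ETerm → ETerm → Prop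
  | fire : ∀ (S S' : ShCtx) (L : SCtx) (x y : ℕ) (s : ETerm),
      Useful (ShCtx.comp S (ShCtx.sub S' x (SCtx.plug L (ETerm.lam y s)))) →
      StepOES (ShCtx.plug S (ETerm.esub (ShCtx.plug S' (ETerm.var x)) x
                 (SCtx.plug L (ETerm.lam y s))))
              (ShCtx.plug S (SCtx.plug L (ETerm.esub (ShCtx.plug S' (ETerm.lam y s)) x
                 (ETerm.lam y s))))

/-- Chain exponential rule ↦oec: S⟨C⟨x⟩[x←L⟨v⟩]⟩ ↦oec S⟨L⟨C⟨v⟩[x←v]⟩⟩ (v a value)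
if S⟨(C↾x)[x←L⟨v⟩]⟩ is useful. -/
inductive StepOEC : ETerm → ETerm → Prop
  | fire : ∀ (S : ShCtx) (C : CCtx) (L : SCtx) (x y : ℕ) (s : ETerm),
      Useful (ShCtx.comp S (ShCtx.sub (CCtx.start C x) x (SCtx.plug L (ETerm.lam y s)))) →
      StepOEC (ShCtx.plug S (ETerm.esub (CCtx.plug C (ETerm.var x)) x
                 (SCtx.plug L (ETerm.lam y s))))
              (ShCtx.plug S (SCtx.plug L (ETerm.esub (CCtx.plug C (ETerm.lam y s)) x
                 (ETerm.lam y s))))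

/-- ↦of := ↦om ∪ ↦oes ∪ ↦oec. -/
def StepOF (t u : ETerm) : Prop := StepOM t u ∨ StepOES t u ∨ StepOEC t u

/-- Subterm occurrence relation. -/
inductive Subterm : ETerm → ETerm → Prop
  | refl : ∀ t, Subterm t t
  | lam : ∀ {s t : ETerm} (x : ℕ), Subterm s t → Subterm s (ETerm.lam x t)
  | appL : ∀ {s t : ETerm} (u : ETerm), Subterm s t → Subterm s (ETerm.app t u)
  | appR : ∀ {s u : ETerm} (t : ETerm), Subterm s u → Subterm s (ETerm.app t u)
  | esubL : ∀ {s t : ETerm} (x : ℕ) (u : ETerm), Subterm s t → Subterm s (ETerm.esub t x u)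
  | esubR : ∀ {s u : ETerm} (x : ℕ) (t : ETerm), Subterm s u → Subterm s (ETerm.esub t x u)

lemma sh_mono (S : ShCtx) {a b : ETerm} (h : Subterm a b) :
    Subterm a (ShCtx.plug S b) := by
  induction S with
  | hole => exact h
  | appL S u ih => exact Subterm.appL u ih
  | appR u S ih => exact Subterm.appR u ih
  | sub S x u ih => exact Subterm.esubL x u ih

lemma sc_mono (L : SCtx) {a b : ETerm} (h : Subterm a b) :
    Subterm a (SCtx.plug L b) := by
  induction L with
  | hole => exact h
  | sub L x u ih => exact Subterm.esubL x u ih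

lemma ic_mono (I : ICtx) {a b : ETerm} (h : Subterm a b) :
    Subterm a (ICtx.plug I b) := by
  induction I with
  | hole => exact h
  | sub I x I' ih ih' => exact Subterm.esubR x _ ih'
  | subT I x u ih => exact Subterm.esubL x u ih

lemma cc_mono (C : CCtx) {a b : ETerm} (h : Subterm a b) :
    Subterm a (CCtx.plug C b) := by
  induction C with
  | base S x I => exact Subterm.esubR x _ (ic_mono I h)
  | cons C x I ih => exact Subterm.esubR x _ (ic_mono I h)
  | under S C ih => exact sh_mono S ih

lemma sh_dec (S : ShCtx) {x : ℕ} {s v : ETerm}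
    (h : Subterm (ETerm.lam x s) (ShCtx.plug S v)) :
    Subterm (ETerm.lam x s) v ∨ ∀ w, Subterm (ETerm.lam x s) (ShCtx.plug S w) := by
  induction S generalizing v with
  | hole => exact Or.inl h
  | appL S u ih =>
    cases h with
    | appL _ h =>
      rcases ih h with h | h
      · exact Or.inl h
      · exact Or.inr fun w => Subterm.appL u (h w)
    | appR _ h => exact Or.inr fun w => Subterm.appR _ h
  | appR u S ih =>
    cases h with
    | appL _ h => exact Or.inr fun w => Subterm.appL _ h
    | appR _ h =>
      rcases ih h with h | h
      · exact Or.inl h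
      · exact Or.inr fun w => Subterm.appR u (h w)
  | sub S y u ih =>
    cases h with
    | esubL _ _ h =>
      rcases ih h with h | h
      · exact Or.inl h
      · exact Or.inr fun w => Subterm.esubL y u (h w)
    | esubR _ _ h => exact Or.inr fun w => Subterm.esubR y _ h

lemma sc_dec (L : SCtx) {x : ℕ} {s v : ETerm}
    (h : Subterm (ETerm.lam x s) (SCtx.plug L v)) :
    Subterm (ETerm.lam x s) v ∨ ∀ w, Subterm (ETerm.lam x s) (SCtx.plug L w) := by
  induction L generalizing v with
  | hole => exact Or.inl h
  | sub L y u ih =>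
    cases h with
    | esubL _ _ h =>
      rcases ih h with h | h
      · exact Or.inl h
      · exact Or.inr fun w => Subterm.esubL y u (h w)
    | esubR _ _ h => exact Or.inr fun w => Subterm.esubR y _ h

lemma ic_dec (I : ICtx) {x : ℕ} {s v : ETerm}
    (h : Subterm (ETerm.lam x s) (ICtx.plug I v)) :
    Subterm (ETerm.lam x s) v ∨ ∀ w, Subterm (ETerm.lam x s) (ICtx.plug I w) := by
  induction I generalizing v with
  | hole => exact Or.inl h
  | sub I y I' ih ih' =>
    cases h with
    | esubL _ _ h => exact Or.inr fun w => Subterm.esubL y _ h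
    | esubR _ _ h =>
      rcases ih' h with h | h
      · exact Or.inl h
      · exact Or.inr fun w => Subterm.esubR y _ (h w)
  | subT I y u ih =>
    cases h with
    | esubL _ _ h =>
      rcases ih h with h | h
      · exact Or.inl h
      · exact Or.inr fun w => Subterm.esubL y u (h w)
    | esubR _ _ h => exact Or.inr fun w => Subterm.esubR y _ h

lemma cc_dec (C : CCtx) {x : ℕ} {s v : ETerm}
    (h : Subterm (ETerm.lam x s) (CCtx.plug C v)) :
    Subterm (ETerm.lam x s) v ∨ ∀ w, Subterm (ETerm.lam x s) (CCtx.plug C w) := by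
  induction C generalizing v with
  | base S y I =>
    cases h with
    | esubL _ _ h => exact Or.inr fun w => Subterm.esubL y _ h
    | esubR _ _ h =>
      rcases ic_dec I h with h | h
      · exact Or.inl h
      · exact Or.inr fun w => Subterm.esubR y _ (h w)
  | cons C y I ih =>
    cases h with
    | esubL _ _ h => exact Or.inr fun w => Subterm.esubL y _ h
    | esubR _ _ h =>
      rcases ic_dec I h with h | h
      · exact Or.inl h
      · exact Or.inr fun w => Subterm.esubR y _ (h w)
  | under S C ih =>
    rcases sh_dec S h with h | h
    · rcases ih h with h | h
      · exact Or.inl h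
      · exact Or.inr fun w => sh_mono S (h w)
    · exact Or.inr fun w => h _

lemma step_inv {t u : ETerm} (st : StepOF t u) {x : ℕ} {s : ETerm}
    (h : Subterm (ETerm.lam x s) u) : Subterm (ETerm.lam x s) t := by
  rcases st with st | st | st
  · rcases st with ⟨S, L, y, b, a, _⟩
    rcases sh_dec S h with h | h
    · rcases sc_dec L h with h | h
      · cases h with
        | esubL _ _ h =>
          exact sh_mono S (Subterm.appL a (sc_mono L (Subterm.lam y h)))
        | esubR _ _ h => exact sh_mono S (Subterm.appR _ h)
      · exact sh_mono S (Subterm.appL a (h _))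
    · exact h _
  · rcases st with ⟨S, S', L, y, z, b, _⟩
    rcases sh_dec S h with h | h
    · rcases sc_dec L h with h | h
      · cases h with
        | esubL _ _ h =>
          rcases sh_dec S' h with h | h
          · exact sh_mono S (Subterm.esubR y _ (sc_mono L h))
          · exact sh_mono S (Subterm.esubL y _ (h _))
        | esubR _ _ h => exact sh_mono S (Subterm.esubR y _ (sc_mono L h))
      · exact sh_mono S (Subterm.esubR y _ (h _))
    · exact h _
  · rcases st with ⟨S, C, L, y, z, b, _⟩
    rcases sh_dec S h with h | h
    · rcases sc_dec L h with h | h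
      · cases h with
        | esubL _ _ h =>
          rcases cc_dec C h with h | h
          · exact sh_mono S (Subterm.esubR y _ (sc_mono L h))
          · exact sh_mono S (Subterm.esubL y _ (h _))
        | esubR _ _ h => exact sh_mono S (Subterm.esubR y _ (sc_mono L h))
      · exact sh_mono S (Subterm.esubR y _ (h _))
    · exact h _


/-- subterm invariant of the Unchaining FBC: if t is a λ-term
(without ES) and t ↦of* u, then every value occurring in u occurs in t. -/
theorem subterm_invariant (t u : ETerm) (hno : ETerm.NoES t)
    (d : Relation.ReflTransGen StepOF t u) :
    ∀ (x : ℕ) (s : ETerm), Subterm (ETerm.lam x s) u → Subterm (ETerm.lam x s) t := by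
  intro x s hs
  induction d with
  | refl => exact hs
  | tail _ st ih => exact ih (step_inv st hs)
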